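/- arXiv:1809.09271 — 4 statements merged into one kernel-verified Lean document; each statement's English description precedes it below -/
import Mathlib

section
/- The map φ sending a two-colored partition λ of k (each part colored blue or red) to the multiset obtained by replacing each blue part j by 2j+1 and each red part j by 2j is a bijection from two-colored partitions of k onto the set of partitions μ all of whose parts are at least 2 and which satisfy Σⱼ ⌊μⱼ/2⌋ = k. -/
/-!
A blue part `j` becomes the odd part `2j+1` and a red part `j` the even part `2j`; both have
`⌊·/2⌋ = j`. Splitting a multiset by parity and halving inverts this, and parts `≥ 2` halve to
positive parts.
-/

namespace TwoColoredPartition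

open Multiset

def encode (pr : Multiset ℕ × Multiset ℕ) : Multiset ℕ :=
  pr.1.map (fun j => 2 * j + 1) + pr.2.map (fun j => 2 * j)

def decode (μ : Multiset ℕ) : Multiset ℕ × Multiset ℕ :=
  ((μ.filter Odd).map (· / 2), (μ.filter (¬ Odd ·)).map (· / 2))

theorem map_div_two_encode (pr : Multiset ℕ × Multiset ℕ) :
    (encode pr).map (· / 2) = pr.1 + pr.2 := by
  simp only [encode, map_add, map_map, Function.comp_def]
  congr 1 <;> exact (map_congr rfl fun j _ => by omega).trans (map_id' _)

theorem decode_fst_add_snd (μ : Multiset ℕ) :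
    (decode μ).1 + (decode μ).2 = μ.map (· / 2) := by
  rw [decode, ← map_add, filter_add_not]

theorem two_le_of_mem_encode {pr : Multiset ℕ × Multiset ℕ} (h₁ : ∀ x ∈ pr.1, 0 < x)
    (h₂ : ∀ x ∈ pr.2, 0 < x) {x : ℕ} (hx : x ∈ encode pr) : 2 ≤ x := by
  simp only [encode, mem_add, mem_map] at hx
  rcases hx with ⟨j, hj, rfl⟩ | ⟨j, hj, rfl⟩
  · have := h₁ j hj; omega
  · have := h₂ j hj; omega

theorem pos_of_mem_map_div_two {μ : Multiset ℕ} (hμ : ∀ x ∈ μ, 2 ≤ x) {x : ℕ}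
    (hx : x ∈ μ.map (· / 2)) : 0 < x := by
  obtain ⟨y, hy, rfl⟩ := mem_map.1 hx
  have := hμ y hy; omega

theorem decode_encode (pr : Multiset ℕ × Multiset ℕ) : decode (encode pr) = pr := by
  have hodd : (encode pr).filter Odd = pr.1.map (fun j => 2 * j + 1) := by
    rw [encode, filter_add, filter_eq_self.2, filter_eq_nil.2, add_zero]
    · simp only [mem_map]; rintro _ ⟨j, -, rfl⟩; simp
    · simp only [mem_map]; rintro _ ⟨j, -, rfl⟩; simp
  have heven : (encode pr).filter (¬ Odd ·) = pr.2.map (fun j => 2 * j) := by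
    rw [encode, filter_add, filter_eq_nil.2, filter_eq_self.2, zero_add]
    · simp only [mem_map]; rintro _ ⟨j, -, rfl⟩; simp
    · simp only [mem_map]; rintro _ ⟨j, -, rfl⟩; simp
  simp only [decode, hodd, heven, map_map, Function.comp_def]
  ext1 <;> exact (map_congr rfl fun j _ => by omega).trans (map_id' _)

theorem encode_decode (μ : Multiset ℕ) : encode (decode μ) = μ := by
  simp only [encode, decode, map_map, Function.comp_def]
  conv_rhs => rw [← filter_add_not Odd μ]
  congr 1 <;> refine (map_congr rfl fun x hx => ?_).trans (map_id' _)
  · obtain ⟨m, rfl⟩ := (mem_filter.1 hx).2; omega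
  · obtain ⟨m, rfl⟩ := Nat.not_odd_iff_even.1 (mem_filter.1 hx).2; omega

/-- Two-colored partitions of `k`, as a pair (blue parts, red parts). -/
def twoColored (k : ℕ) : Set (Multiset ℕ × Multiset ℕ) :=
  {pr | (∀ x ∈ pr.1, 0 < x) ∧ (∀ x ∈ pr.2, 0 < x) ∧ pr.1.sum + pr.2.sum = k}

def halvesSumTo (k : ℕ) : Set (Multiset ℕ) :=
  {μ | (∀ x ∈ μ, 2 ≤ x) ∧ (μ.map (· / 2)).sum = k}

theorem mapsTo_encode (k : ℕ) : Set.MapsTo encode (twoColored k) (halvesSumTo k) := by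
  rintro pr ⟨h₁, h₂, hsum⟩
  refine ⟨fun x => two_le_of_mem_encode h₁ h₂, ?_⟩
  rw [map_div_two_encode, sum_add, hsum]

theorem mapsTo_decode (k : ℕ) : Set.MapsTo decode (halvesSumTo k) (twoColored k) := by
  rintro μ ⟨hμ, hsum⟩
  have hpos : ∀ x ∈ (decode μ).1 + (decode μ).2, 0 < x := fun x hx =>
    pos_of_mem_map_div_two hμ (decode_fst_add_snd μ ▸ hx)
  refine ⟨fun x hx => hpos x (mem_add.2 (.inl hx)),
    fun x hx => hpos x (mem_add.2 (.inr hx)), ?_⟩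
  rw [← sum_add, decode_fst_add_snd, hsum]

theorem bijOn_encode (k : ℕ) : Set.BijOn encode (twoColored k) (halvesSumTo k) :=
  Set.InvOn.bijOn ⟨fun pr _ => decode_encode pr, fun μ _ => encode_decode μ⟩
    (mapsTo_encode k) (mapsTo_decode k)

end TwoColoredPartition

theorem stmt2 (k : ℕ) :
    Set.BijOn
      (fun pr : Multiset ℕ × Multiset ℕ =>
        pr.1.map (fun j => 2 * j + 1) + pr.2.map (fun j => 2 * j))
      {pr : Multiset ℕ × Multiset ℕ |
        (∀ x ∈ pr.1, 0 < x) ∧ (∀ x ∈ pr.2, 0 < x) ∧ pr.1.sum + pr.2.sum = k}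
      {μ : Multiset ℕ | (∀ x ∈ μ, 2 ≤ x) ∧ (μ.map (fun x => x / 2)).sum = k} :=
  TwoColoredPartition.bijOn_encode k
end

section
/- For all integers k ≥ 0 and n ≥ 3k, the number of partitions λ of n with Σᵢ ⌊λᵢ/2⌋ = k equals the number of two-colored partitions of k (partitions of k into parts of two kinds). In particular this count is independent of n once n ≥ 3k. -/
/-!
A part `2a` of `λ` carries `a` arcs, a part `2b + 1` carries `b` arcs, and parts equal to `1` carry
none. So `λ` is determined by the halves `A` of its even parts, the halves `B` of its odd parts
other than `1`, and its number of `1`s, which for `λ ⊢ n` with `k` arcs is forced to be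
`n - 2k - card B`. Conversely a pair `(A, B)` of partitions with `A.sum + B.sum = k` arises from
some `λ ⊢ n` iff `2k + card B ≤ n`, which is automatic once `n ≥ 3k` since `card B ≤ B.sum ≤ k`.
-/

namespace MeanderArcs

open Multiset

def ofHalves (A B : Multiset ℕ) (c : ℕ) : Multiset ℕ :=
  A.map (2 * ·) + B.map (2 * · + 1) + replicate c 1

def evenHalves (l : Multiset ℕ) : Multiset ℕ :=
  (l.filter Even).map (· / 2)

def oddHalves (l : Multiset ℕ) : Multiset ℕ :=
  (l.filter fun x => Odd x ∧ x ≠ 1).map (· / 2)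

section ofHalves

variable {A B : Multiset ℕ} {c : ℕ}

theorem sum_ofHalves : (ofHalves A B c).sum = 2 * (A.sum + B.sum) + card B + c := by
  rw [ofHalves, sum_add, sum_add, sum_map_add, sum_map_mul_left, sum_map_mul_left, map_id',
    map_id', map_const', sum_replicate, sum_replicate, smul_eq_mul, smul_eq_mul]
  ring

theorem sum_map_div_two_ofHalves : ((ofHalves A B c).map (· / 2)).sum = A.sum + B.sum := by
  simp [ofHalves, map_map, Nat.mul_add_div]

theorem pos_of_mem_ofHalves (hA : ∀ a ∈ A, 0 < a) : ∀ x ∈ ofHalves A B c, 0 < x := by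
  simp only [ofHalves, mem_add, mem_map, mem_replicate]
  rintro x ((⟨a, ha, rfl⟩ | ⟨b, -, rfl⟩) | ⟨-, rfl⟩)
  · exact Nat.mul_pos two_pos (hA a ha)
  all_goals omega

theorem evenHalves_ofHalves : evenHalves (ofHalves A B c) = A := by
  have hc : (replicate c 1).filter Even = 0 :=
    filter_eq_nil.2 fun x hx => by simp [eq_of_mem_replicate hx]
  simp [evenHalves, ofHalves, filter_add, filter_map, map_map, hc]

theorem oddHalves_ofHalves (hB : ∀ b ∈ B, 0 < b) : oddHalves (ofHalves A B c) = B := by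
  have hB' : B.filter (· ≠ 0) = B := filter_eq_self.2 fun b hb => (hB b hb).ne'
  have hc : (replicate c 1).filter (fun x => Odd x ∧ x ≠ 1) = 0 :=
    filter_eq_nil.2 fun x hx => by simp [eq_of_mem_replicate hx]
  simp [oddHalves, ofHalves, filter_add, filter_map, map_map, Nat.mul_add_div, Nat.odd_mul, hB', hc]

end ofHalves

section parts

variable (l : Multiset ℕ)

theorem filter_even_add_filter_odd_ne_one_add_filter_eq_one :
    l.filter Even + l.filter (fun x => Odd x ∧ x ≠ 1) + l.filter (· = 1) = l := by
  induction l using Multiset.induction_on with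
  | empty => simp
  | cons a s ih =>
    by_cases h1 : a = 1
    · simp [h1, ih]
    rcases Nat.even_or_odd a with ha | ha
    · simp [ha, h1, ih]
    · simp [ha, h1, Nat.not_even_iff_odd.2 ha, ih]

theorem ofHalves_evenHalves_oddHalves :
    ofHalves (evenHalves l) (oddHalves l) (l.count 1) = l := by
  have hE : (evenHalves l).map (2 * ·) = l.filter Even := by
    rw [evenHalves, map_map]
    exact (map_congr rfl fun x hx => Nat.two_mul_div_two_of_even (mem_filter.1 hx).2).trans
      (map_id' _)
  have hO : (oddHalves l).map (2 * · + 1) = l.filter (fun x => Odd x ∧ x ≠ 1) := by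
    rw [oddHalves, map_map]
    exact (map_congr rfl fun x hx =>
      Nat.two_mul_div_two_add_one_of_odd (mem_filter.1 hx).2.1).trans (map_id' _)
  rw [ofHalves, hE, hO, ← filter_eq', filter_even_add_filter_odd_ne_one_add_filter_eq_one]

theorem sum_evenHalves_add_sum_oddHalves :
    (evenHalves l).sum + (oddHalves l).sum = (l.map (· / 2)).sum := by
  conv_rhs => rw [← ofHalves_evenHalves_oddHalves l, sum_map_div_two_ofHalves]

theorem count_one_eq_sum_sub :
    l.count 1 = l.sum - 2 * (l.map (· / 2)).sum - card (oddHalves l) := by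
  have h := congrArg sum (ofHalves_evenHalves_oddHalves l)
  rw [sum_ofHalves] at h
  rw [← h, ← sum_evenHalves_add_sum_oddHalves]
  omega

theorem pos_of_mem_evenHalves (hl : ∀ x ∈ l, 0 < x) : ∀ a ∈ evenHalves l, 0 < a := by
  simp only [evenHalves, mem_map, mem_filter]
  rintro _ ⟨x, ⟨hx, r, rfl⟩, rfl⟩
  have := hl _ hx
  omega

theorem pos_of_mem_oddHalves : ∀ b ∈ oddHalves l, 0 < b := by
  simp only [oddHalves, mem_map, mem_filter]
  rintro _ ⟨x, ⟨-, ⟨r, rfl⟩, hx1⟩, rfl⟩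
  omega

end parts

end MeanderArcs

open MeanderArcs Multiset in
theorem stmt4 (k n : ℕ) (h : 3 * k ≤ n) :
    {l : Multiset ℕ | (∀ x ∈ l, 0 < x) ∧ l.sum = n ∧ (l.map (fun x => x / 2)).sum = k}.ncard =
    {pr : Multiset ℕ × Multiset ℕ |
      (∀ x ∈ pr.1, 0 < x) ∧ (∀ x ∈ pr.2, 0 < x) ∧ pr.1.sum + pr.2.sum = k}.ncard := by
  symm
  refine Set.ncard_congr (fun p _ => ofHalves p.1 p.2 (n - 2 * k - card p.2)) ?_ ?_ ?_
  · rintro ⟨A, B⟩ ⟨hA, hB, hk : A.sum + B.sum = k⟩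
    dsimp only
    have hcard : card B ≤ B.sum := by simpa using card_nsmul_le_sum (a := 1) hB
    refine ⟨pos_of_mem_ofHalves hA, ?_, ?_⟩
    · rw [sum_ofHalves]
      omega
    · rw [sum_map_div_two_ofHalves, hk]
  · rintro ⟨A, B⟩ ⟨A', B'⟩ ⟨-, hB, -⟩ ⟨-, hB', -⟩ heq
    exact Prod.ext (by simpa only [evenHalves_ofHalves] using congrArg evenHalves heq)
      (by simpa only [oddHalves_ofHalves hB, oddHalves_ofHalves hB'] using congrArg oddHalves heq)
  · rintro l ⟨hl, hn, hk⟩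
    refine ⟨(evenHalves l, oddHalves l),
      ⟨pos_of_mem_evenHalves l hl, pos_of_mem_oddHalves l,
        (sum_evenHalves_add_sum_oddHalves l).trans hk⟩, ?_⟩
    rw [← hn, ← hk, ← count_one_eq_sum_sub]
    exact ofHalves_evenHalves_oddHalves l
end

section
/- Let (a₁, …, a_m) be a composition of n. If there exist indices i < j−1 with Σ_{l=1}^{i} a_l = Σ_{l=j}^{m} a_l, then the meander of the seaweed a₁|…|a_m over n is disconnected (has at least two connected components); hence its index 2C + P − 1 is strictly positive and the seaweed is not Frobenius. -/
/-- Partial sum of the first `i` parts of a composition. -/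
def psum (a : List ℕ) (i : ℕ) : ℕ := (a.take i).sum

/-- Two (1-indexed) vertices are joined by an arc of the composition `a`
if they lie in the same block and are symmetric within that block. -/
def topAdj (a : List ℕ) (j k : ℕ) : Prop :=
  j ≠ k ∧ ∃ i < a.length, psum a i < j ∧ j ≤ psum a (i+1) ∧ psum a i < k ∧
    k ≤ psum a (i+1) ∧ j + k = psum a i + psum a (i+1) + 1

theorem topAdj_symm (a : List ℕ) {j k : ℕ} (h : topAdj a j k) : topAdj a k j := by
  obtain ⟨hne, i, hi, h1, h2, h3, h4, h5⟩ := h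
  exact ⟨hne.symm, i, hi, h3, h4, h1, h2, by omega⟩

/-- The meander of the pair of compositions `(a, b)` of `n`, as a graph on `Fin n`
(vertex `v` represents the 1-indexed vertex `v+1`). -/
def meander (n : ℕ) (a b : List ℕ) : SimpleGraph (Fin n) where
  Adj x y := topAdj a (x.1 + 1) (y.1 + 1) ∨ topAdj b (x.1 + 1) (y.1 + 1)
  symm := ⟨fun _ _ h => h.elim (fun h => Or.inl (topAdj_symm _ h)) (fun h => Or.inr (topAdj_symm _ h))⟩
  loopless := ⟨fun x h => by rcases h with h | h <;> exact h.1 rfl⟩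

/-- Degree of a vertex (cardinality of its neighbor set). -/
noncomputable def deg {n : ℕ} (G : SimpleGraph (Fin n)) (v : Fin n) : ℕ := {w | G.Adj v w}.ncard

/-- A connected component is a cycle iff every vertex in it has degree 2. -/
def IsCycleComp {n : ℕ} (G : SimpleGraph (Fin n)) (c : G.ConnectedComponent) : Prop :=
  ∀ v ∈ c.supp, deg G v = 2

/-- Number of cycle components. -/
noncomputable def numCycles {n : ℕ} (G : SimpleGraph (Fin n)) : ℕ :=
  {c : G.ConnectedComponent | IsCycleComp G c}.ncard

/-- Number of path components (components of a meander which are not cycles are paths). -/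
noncomputable def numPaths {n : ℕ} (G : SimpleGraph (Fin n)) : ℕ :=
  {c : G.ConnectedComponent | ¬ IsCycleComp G c}.ncard

/-- The index `2C + P - 1` of a meander. -/
noncomputable def mIndex {n : ℕ} (G : SimpleGraph (Fin n)) : ℤ :=
  2 * numCycles G + numPaths G - 1

/-!
Let `s` be the common value of `a₁ + ⋯ + aᵢ` and `aⱼ + ⋯ + aₘ`. The vertices among the first `s`
and the last `s` form a set closed under the edges of the meander: a top block never straddles
a partial sum, in particular neither `s` nor `n - s`, and the bottom arcs `k ↦ n + 1 - k` swap the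
first `s` vertices with the last `s`. The block `a_{i+1}` lies strictly between the two ends, so
the vertex `s + 1` is outside this set while the vertex `1` is inside it.
-/

lemma psum_mono (a : List ℕ) : Monotone (psum a) := by
  intro i j hij
  unfold psum
  rw [← List.take_append_drop i (a.take j), List.sum_append, List.take_take,
    Nat.min_eq_left hij]
  exact Nat.le_add_right _ _

lemma psum_lt_psum {a : List ℕ} (hpos : ∀ x ∈ a, 0 < x) {i j : ℕ} (hij : i < j)
    (hj : j ≤ a.length) : psum a i < psum a j := by
  have hi : i < a.length := by omega
  have hstep : psum a i < psum a (i + 1) := by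
    unfold psum
    rw [List.sum_take_succ _ _ hi]
    exact Nat.lt_add_of_pos_right (hpos _ (List.getElem_mem hi))
  exact hstep.trans_le (psum_mono a hij)

lemma topAdj_le_psum {a : List ℕ} {v w k : ℕ} (hvw : topAdj a v w) (hv : v ≤ psum a k) :
    w ≤ psum a k := by
  obtain ⟨-, l, -, hlv, -, -, hwl, -⟩ := hvw
  have hlk : l + 1 ≤ k := by
    by_contra! hkl
    have := psum_mono a (show k ≤ l by omega)
    omega
  exact hwl.trans (psum_mono a hlk)

lemma topAdj_psum_lt {a : List ℕ} {v w k : ℕ} (hvw : topAdj a v w) (hv : psum a k < v) :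
    psum a k < w := by
  obtain ⟨-, l, -, -, hvl, hlw, -, -⟩ := hvw
  have hkl : k ≤ l := by
    by_contra! hlk
    have := psum_mono a (show l + 1 ≤ k by omega)
    omega
  exact (psum_mono a hkl).trans_lt hlw

lemma topAdj_singleton_add {n v w : ℕ} (hvw : topAdj [n] v w) : v + w = n + 1 := by
  obtain ⟨-, l, hl, -, -, -, -, hsum⟩ := hvw
  obtain rfl : l = 0 := by simpa using hl
  simpa [psum] using hsum

lemma SimpleGraph.Reachable.mem_of_adj_mem {V : Type*} {G : SimpleGraph V} {S : Set V}
    (hS : ∀ v w, G.Adj v w → v ∈ S → w ∈ S) {u w : V} (huw : G.Reachable u w) (hu : u ∈ S) :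
    w ∈ S := by
  obtain ⟨p⟩ := huw
  induction p with
  | nil => exact hu
  | cons hadj _ ih => exact ih (hS _ _ hadj hu)

lemma numCycles_add_numPaths {n : ℕ} (G : SimpleGraph (Fin n)) :
    numCycles G + numPaths G = Nat.card G.ConnectedComponent :=
  Set.ncard_add_ncard_compl _

lemma mIndex_pos_of_not_preconnected {n : ℕ} {G : SimpleGraph (Fin n)} (hG : ¬ G.Preconnected) :
    0 < mIndex G := by
  obtain ⟨u, w, huw⟩ : ∃ u w, ¬ G.Reachable u w := by
    simpa [SimpleGraph.Preconnected] using hG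
  have hne : G.connectedComponentMk u ≠ G.connectedComponentMk w :=
    fun h => huw (SimpleGraph.ConnectedComponent.eq.mp h)
  have hcard : 1 < Nat.card G.ConnectedComponent :=
    Finite.one_lt_card_iff_nontrivial.mpr ⟨_, _, hne⟩
  have := numCycles_add_numPaths G
  unfold mIndex
  omega

lemma meander_not_preconnected {n : ℕ} {a : List ℕ} {k l : ℕ} (hkl : psum a k + psum a l = n)
    (hk : 0 < psum a k) (hlt : psum a k < psum a l) : ¬ (meander n a [n]).Preconnected := by
  set S : Set (Fin n) := {v | v.1 + 1 ≤ psum a k ∨ psum a l < v.1 + 1}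
  have hS : ∀ v w, (meander n a [n]).Adj v w → v ∈ S → w ∈ S := by
    rintro v w (htop | hbot) (hv | hv)
    · exact Or.inl (topAdj_le_psum htop hv)
    · exact Or.inr (topAdj_psum_lt htop hv)
    · have := topAdj_singleton_add hbot
      exact Or.inr (by omega)
    · have := topAdj_singleton_add hbot
      exact Or.inl (by omega)
  intro hconn
  have hreach := hconn ⟨0, by omega⟩ ⟨psum a k, by omega⟩
  have hmem : (⟨psum a k, by omega⟩ : Fin n) ∈ S :=
    hreach.mem_of_adj_mem hS (Or.inl (show 0 + 1 ≤ psum a k by omega))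
  rcases hmem with h | h <;> simp only at h <;> omega

theorem stmt10_general (n : ℕ) (a : List ℕ) (hpos : ∀ x ∈ a, 0 < x) (hsum : a.sum = n)
    (h : ∃ i j, 1 ≤ i ∧ i + 1 < j ∧ j ≤ a.length ∧
      (a.take i).sum = (a.drop (j - 1)).sum) :
    ¬ (meander n a [n]).Connected ∧ 0 < mIndex (meander n a [n]) := by
  obtain ⟨i, j, hi, hij, hj, hends⟩ := h
  have hkl : psum a i + psum a (j - 1) = n := by
    rw [psum, hends, add_comm, ← hsum]
    exact List.sum_take_add_sum_drop a (j - 1)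
  have hk : 0 < psum a i := by
    simpa [psum] using psum_lt_psum hpos (show 0 < i by omega) (by omega)
  have hlt : psum a i < psum a (j - 1) := psum_lt_psum hpos (by omega) (by omega)
  have hdisc := meander_not_preconnected hkl hk hlt
  exact ⟨fun hconn => hdisc hconn.preconnected, mIndex_pos_of_not_preconnected hdisc⟩

theorem stmt10 (n : ℕ) (hn : 0 < n) (a : List ℕ) (hpos : ∀ x ∈ a, 0 < x) (hsum : a.sum = n)
    (h : ∃ i j, 1 ≤ i ∧ i + 1 < j ∧ j ≤ a.length ∧
      (a.take i).sum = (a.drop (j - 1)).sum) :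
    ¬ (meander n a [n]).Connected ∧ 0 < mIndex (meander n a [n]) :=
  stmt10_general n a hpos hsum h
end

section
/- For every f ≥ 0, the meander of the seaweed of type 1|2|2|…|2 (one 1 followed by f twos) over n = 2f+1 is connected and is a single path; hence its index is 0 and the corresponding partition (2^f, 1) of the odd number n is Frobenius. -/
/-!
Number the vertices `0, …, 2f`. The top arcs join `2m+1` and `2m+2`, the bottom arcs join `x` and
`2f - x`. Alternating bottom and top arcs, `0 → 2f → 2f-1 → 1 → 2 → 2f-2 → 2f-3 → 3 → ⋯` runs
through every vertex, so the meander is connected. Vertex `0` lies on no top arc, so its degree is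
at most `1` and the single component is not a cycle.
-/

section Index

variable {n : ℕ} {G : SimpleGraph (Fin n)}

theorem not_isCycleComp_of_connected (hG : G.Connected) {v : Fin n} (hv : deg G v ≠ 2)
    (c : G.ConnectedComponent) : ¬IsCycleComp G c := by
  have hc : c = G.connectedComponentMk v := hG.preconnected.subsingleton_connectedComponent.elim _ _
  exact fun hcyc => hv (hcyc v (hc ▸ rfl))

theorem numCycles_eq_zero_of_connected (hG : G.Connected) {v : Fin n} (hv : deg G v ≠ 2) :
    numCycles G = 0 := by
  simp [numCycles, not_isCycleComp_of_connected hG hv]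

theorem numPaths_eq_one_of_connected (hG : G.Connected) {v : Fin n} (hv : deg G v ≠ 2) :
    numPaths G = 1 := by
  have := hG.preconnected.subsingleton_connectedComponent
  have : Unique G.ConnectedComponent := uniqueOfSubsingleton (G.connectedComponentMk v)
  simp [numPaths, not_isCycleComp_of_connected hG hv]

theorem mIndex_eq_zero_of_connected (hG : G.Connected) {v : Fin n} (hv : deg G v ≠ 2) :
    mIndex G = 0 := by
  simp [mIndex, numCycles_eq_zero_of_connected hG hv, numPaths_eq_one_of_connected hG hv]

end Index

theorem psum_zero (a : List ℕ) : psum a 0 = 0 := rfl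

theorem psum_singleton_one (n : ℕ) : psum [n] 1 = n := by
  simp [psum]

theorem topAdj_singleton_iff {n j k : ℕ} :
    topAdj [n] j k ↔ j ≠ k ∧ 0 < j ∧ 0 < k ∧ j + k = n + 1 := by
  simp only [topAdj, List.length_singleton, Nat.lt_one_iff, exists_eq_left, zero_add,
    psum_zero, psum_singleton_one]
  omega

theorem psum_one_cons_replicate_two (f i : ℕ) :
    psum (1 :: List.replicate f 2) (i + 1) = 2 * min i f + 1 := by
  simp only [psum, List.take_succ_cons, List.take_replicate, List.sum_cons, List.sum_replicate,
    smul_eq_mul]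
  omega

theorem topAdj_one_cons_replicate_two_iff {f j k : ℕ} :
    topAdj (1 :: List.replicate f 2) j k ↔
      j ≠ k ∧ 0 < j ∧ 0 < k ∧ j ≤ 2 * f + 1 ∧ k ≤ 2 * f + 1 ∧ j / 2 = k / 2 := by
  constructor
  · rintro ⟨hne, (_ | i), -, hj, hj', hk, hk', hsum⟩ <;>
      simp only [psum_zero, psum_one_cons_replicate_two] at hj hj' hk hk' hsum <;> omega
  · rintro ⟨hne, hj, hk, hjf, hkf, hdiv⟩
    obtain ⟨i, hi⟩ : ∃ i, j / 2 = i + 1 := ⟨j / 2 - 1, by omega⟩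
    refine ⟨hne, i + 1, ?_, ?_⟩
    · simp only [List.length_cons, List.length_replicate]
      omega
    · simp only [psum_one_cons_replicate_two]
      omega

abbrev oneTwosMeander (f : ℕ) : SimpleGraph (Fin (2 * f + 1)) :=
  meander (2 * f + 1) (1 :: List.replicate f 2) [2 * f + 1]

section OneTwosMeander

variable {f : ℕ}

theorem oneTwosMeander_adj_iff {x y : Fin (2 * f + 1)} :
    (oneTwosMeander f).Adj x y ↔ x ≠ y ∧ ((x.1 + 1) / 2 = (y.1 + 1) / 2 ∨ x.1 + y.1 = 2 * f) := by
  simp only [oneTwosMeander, meander, topAdj_one_cons_replicate_two_iff, topAdj_singleton_iff,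
    ne_eq, Fin.ext_iff]
  omega

theorem oneTwosMeander_reachable_of_add_eq {x y : Fin (2 * f + 1)} (h : x.1 + y.1 = 2 * f) :
    (oneTwosMeander f).Reachable x y := by
  by_cases hxy : x = y
  · exact hxy ▸ .refl x
  · exact (oneTwosMeander_adj_iff.2 ⟨hxy, .inr h⟩).reachable

theorem oneTwosMeander_reachable_of_div_two_eq {x y : Fin (2 * f + 1)}
    (h : (x.1 + 1) / 2 = (y.1 + 1) / 2) : (oneTwosMeander f).Reachable x y := by
  by_cases hxy : x = y
  · exact hxy ▸ .refl x
  · exact (oneTwosMeander_adj_iff.2 ⟨hxy, .inl h⟩).reachable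

theorem oneTwosMeander_reachable_zero_of_le (j : ℕ) (hj : j ≤ f) :
    (oneTwosMeander f).Reachable 0 ⟨j, by omega⟩ := by
  induction j with
  | zero => rfl
  | succ j ih =>
    refine (ih (by omega)).trans ?_
    rcases Nat.even_or_odd j with ⟨m, hm⟩ | ⟨m, hm⟩
    · have mirror : (oneTwosMeander f).Reachable ⟨j, by omega⟩ ⟨2 * f - j, by omega⟩ :=
        oneTwosMeander_reachable_of_add_eq (by simp only; omega)
      have top : (oneTwosMeander f).Reachable ⟨2 * f - j, by omega⟩ ⟨2 * f - j - 1, by omega⟩ :=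
        oneTwosMeander_reachable_of_div_two_eq (by simp only; omega)
      exact mirror.trans (top.trans (oneTwosMeander_reachable_of_add_eq (by simp only; omega)))
    · exact oneTwosMeander_reachable_of_div_two_eq (by simp only; omega)

theorem oneTwosMeander_connected : (oneTwosMeander f).Connected := by
  have reach (x : Fin (2 * f + 1)) : (oneTwosMeander f).Reachable 0 x := by
    rcases le_or_gt x.1 f with hx | hx
    · exact oneTwosMeander_reachable_zero_of_le x.1 hx
    · exact (oneTwosMeander_reachable_zero_of_le (2 * f - x.1) (by omega)).trans
        (oneTwosMeander_reachable_of_add_eq (by simp only; omega))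
  exact (SimpleGraph.connected_iff _).2 ⟨fun x y => (reach x).symm.trans (reach y), ⟨0⟩⟩

theorem deg_oneTwosMeander_zero_le_one : deg (oneTwosMeander f) 0 ≤ 1 := by
  refine (Set.ncard_le_one_iff).2 fun {a b} ha hb => ?_
  rw [Set.mem_ofPred_eq, oneTwosMeander_adj_iff] at ha hb
  simp only [ne_eq, Fin.ext_iff, Fin.coe_ofNat_eq_mod, Nat.zero_mod, zero_add, Nat.reduceDiv]
    at ha hb ⊢
  omega

end OneTwosMeander

theorem stmt12 (f : ℕ) :
    (meander (2 * f + 1) (1 :: List.replicate f 2) [2 * f + 1]).Connected ∧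
    numCycles (meander (2 * f + 1) (1 :: List.replicate f 2) [2 * f + 1]) = 0 ∧
    numPaths (meander (2 * f + 1) (1 :: List.replicate f 2) [2 * f + 1]) = 1 ∧
    mIndex (meander (2 * f + 1) (1 :: List.replicate f 2) [2 * f + 1]) = 0 := by
  have hdeg : deg (oneTwosMeander f) 0 ≠ 2 := by
    have := deg_oneTwosMeander_zero_le_one (f := f)
    omega
  exact ⟨oneTwosMeander_connected, numCycles_eq_zero_of_connected oneTwosMeander_connected hdeg,
    numPaths_eq_one_of_connected oneTwosMeander_connected hdeg,
    mIndex_eq_zero_of_connected oneTwosMeander_connected hdeg⟩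
end
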